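/- arXiv:1106.4743 — 6 statements merged into one kernel-verified Lean document; each statement's English description precedes it below -/
import Mathlib

section
/- Let $\rho_0,\ldots,\rho_l \in \mathbb{Z}^2$ (with $l > 2$) be the cyclically ordered primitive ray generators of a smooth complete fan, with integers $b_i$ defined by $b_i\rho_i = \rho_{i-1}+\rho_{i+1}$. Suppose $b_0 < 0$. Then there exists a unique index $\alpha$ with $1 < \alpha < l$ such that $\rho_\alpha = -\rho_0$. -/
/-- The determinant of two vectors in `ℤ²`. -/
def det2 (v w : ℤ × ℤ) : ℤ := v.1 * w.2 - v.2 * w.1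

/-- The combinatorial data of a smooth complete toric surface: primitive ray generators
`ρ 0, …, ρ l` in counterclockwise cyclic order (each consecutive pair is a positively
oriented basis of `ℤ²`), self-intersection data `b` with `b i • ρ i = ρ (i-1) + ρ (i+1)`,
the cones covering the plane, and distinct cones having disjoint interiors. -/
structure SmoothCompleteFan (l : ℕ) where
  ρ : ZMod (l + 1) → ℤ × ℤ
  b : ZMod (l + 1) → ℤ
  inj : Function.Injective ρ
  smooth_ccw : ∀ i, det2 (ρ i) (ρ (i + 1)) = 1
  rel : ∀ i, b i • ρ i = ρ (i - 1) + ρ (i + 1)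
  complete : ∀ v : ℤ × ℤ, ∃ (i : ZMod (l + 1)) (a c : ℕ),
      v = (a : ℤ) • ρ i + (c : ℤ) • ρ (i + 1)
  proper : ∀ i j : ZMod (l + 1), i ≠ j → ∀ v : ℤ × ℤ,
      ¬ ((∃ a c : ℕ, 0 < a ∧ 0 < c ∧ v = (a : ℤ) • ρ i + (c : ℤ) • ρ (i + 1)) ∧
         (∃ a c : ℕ, 0 < a ∧ 0 < c ∧ v = (a : ℤ) • ρ j + (c : ℤ) • ρ (j + 1)))

/-!
In the basis `ρ k, ρ (k+1)` a vector `v` has coordinates `det2 v (ρ (k+1))` and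
`det2 (ρ k) v`. An interior point of one cone lies in no other closed cone, since a large multiple of it plus an interior point of the other cone
would lie in the interior of both. Consequently, walking along the fan, a vector `w` in the
interior of cone `k` cannot change sides with respect to the rays before reaching cone `k`.

The relation `ρ (-1) + ρ 1 = b 0 • ρ 0` with `b 0 < 0` puts `-ρ 1` in the interior of cone
`-1` and `-ρ (-1)` in the interior of cone `0`. Walking from these, all of `ρ 2, …, ρ l` lie
strictly to the left of `ρ 1`, and all of `ρ 1, …, ρ (l-1)` strictly to the right of `ρ (-1)`.
This keeps `-ρ 0` out of the interior of every cone, so by completeness it is a nonnegative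
multiple of some ray, hence a ray `ρ α`, as `ρ 0` is primitive; the smoothness of the cones
at `ρ 0` rules out `α ∈ {0, 1, l}`, and injectivity gives uniqueness.
-/

@[simp] lemma det2_add_left (u v w : ℤ × ℤ) : det2 (u + v) w = det2 u w + det2 v w := by
  simp only [det2, Prod.fst_add, Prod.snd_add]; ring

@[simp] lemma det2_add_right (u v w : ℤ × ℤ) : det2 u (v + w) = det2 u v + det2 u w := by
  simp only [det2, Prod.fst_add, Prod.snd_add]; ring

@[simp] lemma det2_smul_left (p : ℤ) (v w : ℤ × ℤ) : det2 (p • v) w = p * det2 v w := by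
  simp only [det2, Prod.smul_fst, Prod.smul_snd, smul_eq_mul]; ring

@[simp] lemma det2_smul_right (p : ℤ) (v w : ℤ × ℤ) : det2 v (p • w) = p * det2 v w := by
  simp only [det2, Prod.smul_fst, Prod.smul_snd, smul_eq_mul]; ring

@[simp] lemma det2_neg_left (v w : ℤ × ℤ) : det2 (-v) w = -det2 v w := by
  simp only [det2, Prod.fst_neg, Prod.snd_neg]; ring

@[simp] lemma det2_neg_right (v w : ℤ × ℤ) : det2 v (-w) = -det2 v w := by
  simp only [det2, Prod.fst_neg, Prod.snd_neg]; ring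

@[simp] lemma det2_self (v : ℤ × ℤ) : det2 v v = 0 := by
  simp only [det2]; ring

lemma det2_swap (v w : ℤ × ℤ) : det2 w v = -det2 v w := by
  simp only [det2]; ring

lemma eq_det2_smul_add_det2_smul {x y : ℤ × ℤ} (h : det2 x y = 1) (v : ℤ × ℤ) :
    v = det2 v y • x + det2 x v • y := by
  have h' : x.1 * y.2 - x.2 * y.1 = 1 := h
  refine Prod.ext ?_ ?_ <;>
    simp only [det2, Prod.fst_add, Prod.snd_add, Prod.smul_fst, Prod.smul_snd, smul_eq_mul]
  · linear_combination (-v.1) * h'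
  · linear_combination (-v.2) * h'

lemma ZMod.natCast_ne_zero_of_pos_of_lt {n m : ℕ} (h0 : 0 < m) (hn : m < n) :
    (m : ZMod n) ≠ 0 := by
  rw [Ne, ZMod.natCast_eq_zero_iff]
  exact Nat.not_dvd_of_pos_of_lt h0 hn

lemma ZMod.natCast_ne_neg_one_of_lt {n m : ℕ} (hm : m + 1 < n) : (m : ZMod n) ≠ -1 := by
  rw [Ne, eq_neg_iff_add_eq_zero, ← Nat.cast_succ]
  exact ZMod.natCast_ne_zero_of_pos_of_lt m.succ_pos hm

lemma ZMod.one_lt_val_of_ne {n : ℕ} {j : ZMod (n + 1)} (h0 : j ≠ 0) (h1 : j ≠ 1) :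
    1 < j.val := by
  have h0' : j.val ≠ 0 := (ZMod.val_ne_zero j).mpr h0
  have h1' : j.val ≠ 1 := fun h => h1 (by rw [← ZMod.natCast_zmod_val j, h, Nat.cast_one])
  omega

lemma ZMod.val_lt_of_add_one_ne_zero {n : ℕ} {j : ZMod (n + 1)} (h : j + 1 ≠ 0) :
    j.val < n := by
  have hn : j.val ≠ n := fun hj => h (by
    rw [← ZMod.natCast_zmod_val j, hj, ← Nat.cast_succ, ZMod.natCast_self])
  have := ZMod.val_lt j
  omega

namespace SmoothCompleteFan

variable {l : ℕ} (F : SmoothCompleteFan l)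

def InCone (k : ZMod (l + 1)) (v : ℤ × ℤ) : Prop :=
  ∃ p q : ℤ, 0 ≤ p ∧ 0 ≤ q ∧ v = p • F.ρ k + q • F.ρ (k + 1)

def InOpenCone (k : ZMod (l + 1)) (v : ℤ × ℤ) : Prop :=
  ∃ p q : ℤ, 0 < p ∧ 0 < q ∧ v = p • F.ρ k + q • F.ρ (k + 1)

variable {F}

lemma eq_det2_smul_rho_add (k : ZMod (l + 1)) (v : ℤ × ℤ) :
    v = det2 v (F.ρ (k + 1)) • F.ρ k + det2 (F.ρ k) v • F.ρ (k + 1) :=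
  eq_det2_smul_add_det2_smul (F.smooth_ccw k) v

lemma inCone_of_det2_nonneg {k : ZMod (l + 1)} {v : ℤ × ℤ} (h : 0 ≤ det2 v (F.ρ (k + 1)))
    (h' : 0 ≤ det2 (F.ρ k) v) : F.InCone k v :=
  ⟨_, _, h, h', eq_det2_smul_rho_add k v⟩

lemma InOpenCone.det2_pos {k : ZMod (l + 1)} {v : ℤ × ℤ} (hv : F.InOpenCone k v) :
    0 < det2 (F.ρ k) v ∧ 0 < det2 v (F.ρ (k + 1)) := by
  obtain ⟨p, q, hp, hq, rfl⟩ := hv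
  have h := F.smooth_ccw k
  simp only [det2_add_left, det2_add_right, det2_smul_left, det2_smul_right, det2_self, h]
  constructor <;> linarith

lemma InOpenCone.two_le_det2 {k : ZMod (l + 1)} {v u : ℤ × ℤ} (hv : F.InOpenCone k v)
    (h : 0 < det2 (F.ρ k) u) (h' : 0 < det2 (F.ρ (k + 1)) u) : 2 ≤ det2 v u := by
  obtain ⟨p, q, hp, hq, rfl⟩ := hv
  simp only [det2_add_left, det2_smul_left]
  nlinarith

lemma InCone.smul_add {k : ZMod (l + 1)} {v s : ℤ × ℤ} (hv : F.InCone k v) {M : ℤ}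
    (hM : 0 ≤ M) (hs : F.InOpenCone k s) : F.InOpenCone k (M • v + s) := by
  obtain ⟨p, q, hp, hq, rfl⟩ := hv
  obtain ⟨p', q', hp', hq', rfl⟩ := hs
  exact ⟨M * p + p', M * q + q', by positivity, by positivity, by module⟩

lemma InOpenCone.exists_smul_add {k : ZMod (l + 1)} {v : ℤ × ℤ} (hv : F.InOpenCone k v)
    (s : ℤ × ℤ) : ∃ M : ℤ, 0 ≤ M ∧ F.InOpenCone k (M • v + s) := by
  obtain ⟨p, q, hp, hq, rfl⟩ := hv
  set x := det2 s (F.ρ (k + 1))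
  set y := det2 (F.ρ k) s
  refine ⟨|x| + |y| + 1, by positivity, (|x| + |y| + 1) * p + x, (|x| + |y| + 1) * q + y,
    ?_, ?_, ?_⟩
  · nlinarith [neg_abs_le x, abs_nonneg y, abs_nonneg x]
  · nlinarith [neg_abs_le y, abs_nonneg x, abs_nonneg y]
  · rw [eq_det2_smul_rho_add k s]
    module

lemma InOpenCone.not_inOpenCone {k k' : ZMod (l + 1)} {v : ℤ × ℤ} (hv : F.InOpenCone k v)
    (hk : k ≠ k') : ¬ F.InOpenCone k' v := by
  obtain ⟨p, q, hp, hq, rfl⟩ := hv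
  rintro ⟨p', q', hp', hq', h⟩
  lift p to ℕ using hp.le
  lift q to ℕ using hq.le
  lift p' to ℕ using hp'.le
  lift q' to ℕ using hq'.le
  exact F.proper k k' hk _ ⟨⟨p, q, by exact_mod_cast hp, by exact_mod_cast hq, rfl⟩,
    ⟨p', q', by exact_mod_cast hp', by exact_mod_cast hq', h⟩⟩

lemma InOpenCone.not_inCone {k k' : ZMod (l + 1)} {v : ℤ × ℤ} (hv : F.InOpenCone k v)
    (hk : k ≠ k') : ¬ F.InCone k' v := by
  intro hv'
  have hs : F.InOpenCone k' (F.ρ k' + F.ρ (k' + 1)) := ⟨1, 1, one_pos, one_pos, by simp⟩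
  obtain ⟨M, hM, hMv⟩ := hv.exists_smul_add (F.ρ k' + F.ρ (k' + 1))
  exact hMv.not_inOpenCone hk (hv'.smul_add hM hs)

section Walk

variable {k : ZMod (l + 1)} {w : ℤ × ℤ}

lemma InOpenCone.one_le_det2_rho_add_one (hw : F.InOpenCone k w) {m : ZMod (l + 1)}
    (hm : m ≠ k) (h : 1 ≤ det2 (F.ρ m) w) : 1 ≤ det2 (F.ρ (m + 1)) w := by
  by_contra! h'
  refine hw.not_inCone hm.symm (inCone_of_det2_nonneg ?_ (by linarith))
  rw [det2_swap]
  linarith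

lemma InOpenCone.one_le_det2_rho_of_add_one (hw : F.InOpenCone k w) {m : ZMod (l + 1)}
    (hm : m ≠ k) (h : 1 ≤ det2 w (F.ρ (m + 1))) : 1 ≤ det2 w (F.ρ m) := by
  by_contra! h'
  refine hw.not_inCone hm.symm (inCone_of_det2_nonneg (by linarith) ?_)
  rw [det2_swap]
  linarith

lemma InOpenCone.one_le_det2_rho_of_le (hw : F.InOpenCone k w) {a b : ℕ}
    (hk : ∀ m, a ≤ m → m < b → (m : ZMod (l + 1)) ≠ k) (ha : 1 ≤ det2 (F.ρ a) w) :
    ∀ m, a ≤ m → m ≤ b → 1 ≤ det2 (F.ρ m) w := by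
  intro m ham hmb
  induction m, ham using Nat.le_induction with
  | base => exact ha
  | succ m ham ih =>
    rw [Nat.cast_succ]
    exact hw.one_le_det2_rho_add_one (hk m ham (by omega)) (ih (by omega))

lemma InOpenCone.one_le_det2_rho_of_le' (hw : F.InOpenCone k w) {a b : ℕ}
    (hk : ∀ m, a ≤ m → m < b → (m : ZMod (l + 1)) ≠ k) (hb : 1 ≤ det2 w (F.ρ b)) :
    ∀ m, a ≤ m → m ≤ b → 1 ≤ det2 w (F.ρ m) := by
  intro m ham hmb
  refine Nat.decreasingInduction' (P := fun m => 1 ≤ det2 w (F.ρ m)) (fun m' hm'b _ ih => ?_)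
    hmb hb
  rw [Nat.cast_succ] at ih
  exact hw.one_le_det2_rho_of_add_one (hk m' (by omega) hm'b) ih

end Walk

lemma exists_nonneg_smul_rho_eq {v : ℤ × ℤ} (hv : ∀ k, ¬ F.InOpenCone k v) :
    ∃ (j : ZMod (l + 1)) (c : ℤ), 0 ≤ c ∧ v = c • F.ρ j := by
  obtain ⟨i, a, c, rfl⟩ := F.complete v
  rcases Nat.eq_zero_or_pos a with rfl | ha
  · exact ⟨i + 1, c, by positivity, by simp⟩
  rcases Nat.eq_zero_or_pos c with rfl | hc
  · exact ⟨i, a, by positivity, by simp⟩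
  exact (hv i ⟨a, c, by exact_mod_cast ha, by exact_mod_cast hc, rfl⟩).elim

lemma ne_of_rho_eq_neg {j k : ZMod (l + 1)} (h : F.ρ j = -F.ρ k) :
    j ≠ k ∧ j ≠ k + 1 ∧ j + 1 ≠ k := by
  have hk := F.smooth_ccw k
  have hj := F.smooth_ccw j
  refine ⟨?_, ?_, ?_⟩ <;> rintro rfl
  · rw [h, det2_neg_left] at hk
    omega
  · simp [h] at hk
  · simp [h] at hj

variable (hb0 : F.b 0 < 0)
include hb0

lemma inOpenCone_neg_rho_one : F.InOpenCone (-1) (-F.ρ 1) := by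
  have h := F.rel 0
  rw [zero_sub, zero_add] at h
  refine ⟨1, -F.b 0, one_pos, by omega, ?_⟩
  rw [neg_add_cancel, neg_smul, h]
  abel

lemma inOpenCone_neg_rho_neg_one : F.InOpenCone 0 (-F.ρ (-1)) := by
  have h := F.rel 0
  rw [zero_sub, zero_add] at h
  refine ⟨-F.b 0, 1, by omega, one_pos, ?_⟩
  rw [zero_add, neg_smul, h]
  abel

lemma one_le_det2_rho_one_rho {m : ℕ} (h2m : 2 ≤ m) (hml : m ≤ l) :
    1 ≤ det2 (F.ρ 1) (F.ρ m) := by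
  have h12 : 1 ≤ det2 (F.ρ (2 : ℕ)) (-F.ρ 1) := by
    rw [det2_neg_right, det2_swap, neg_neg, Nat.cast_ofNat, ← one_add_one_eq_two,
      F.smooth_ccw 1]
  have := (inOpenCone_neg_rho_one hb0).one_le_det2_rho_of_le
    (fun _ _ _ => ZMod.natCast_ne_neg_one_of_lt (by omega)) h12 m h2m hml
  rwa [det2_neg_right, det2_swap, neg_neg] at this

lemma one_le_det2_rho_rho_neg_one {m : ℕ} (h1m : 1 ≤ m) (hml : m < l) :
    1 ≤ det2 (F.ρ m) (F.ρ (-1)) := by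
  have hl1 : 1 ≤ det2 (-F.ρ (-1)) (F.ρ (l - 1 : ℕ)) := by
    have h := F.smooth_ccw ((l - 1 : ℕ) : ZMod (l + 1))
    rw [show ((l - 1 : ℕ) : ZMod (l + 1)) + 1 = -1 by
      rw [eq_neg_iff_add_eq_zero, ← ZMod.natCast_self (l + 1)]
      norm_cast
      congr 1
      omega] at h
    rw [det2_neg_left, det2_swap, neg_neg, h]
  have := (inOpenCone_neg_rho_neg_one hb0).one_le_det2_rho_of_le'
    (fun _ _ _ => ZMod.natCast_ne_zero_of_pos_of_lt (by omega) (by omega)) hl1 m h1m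
    (by omega)
  rwa [det2_neg_left, det2_swap, neg_neg] at this

variable (hl : 2 < l)
include hl

lemma not_inOpenCone_neg_rho_zero (k : ZMod (l + 1)) : ¬ F.InOpenCone k (-F.ρ 0) := by
  intro hk
  have h01 := F.smooth_ccw 0
  have hl0 := F.smooth_ccw (-1)
  rw [zero_add] at h01
  rw [neg_add_cancel] at hl0
  have hk0 : k ≠ 0 := by
    rintro rfl
    simpa using hk.det2_pos.1
  have hk1 : k + 1 ≠ 0 := by
    intro h
    simpa [h] using hk.det2_pos.2
  obtain ⟨m, hm, hml, rfl⟩ : ∃ m : ℕ, 0 < m ∧ m < l ∧ (m : ZMod (l + 1)) = k :=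
    ⟨k.val, (ZMod.val_pos).mpr hk0, ZMod.val_lt_of_add_one_ne_zero hk1,
      ZMod.natCast_zmod_val k⟩
  rcases (show m = 1 ∨ 2 ≤ m by omega) with rfl | h2m
  · have h := hk.two_le_det2 (u := F.ρ (-1))
      (by linarith [one_le_det2_rho_rho_neg_one hb0 le_rfl (by omega : 1 < l)])
      (by rw [← Nat.cast_succ]
          linarith [one_le_det2_rho_rho_neg_one hb0 (by omega : 1 ≤ 2) hl])
    rw [det2_neg_left, det2_swap, hl0] at h
    omega
  · have h := hk.two_le_det2 (u := -F.ρ 1)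
      (by rw [det2_neg_right, det2_swap, neg_neg]
          linarith [one_le_det2_rho_one_rho hb0 h2m hml.le])
      (by rw [det2_neg_right, det2_swap, neg_neg, ← Nat.cast_succ]
          linarith [one_le_det2_rho_one_rho hb0 (by omega : 2 ≤ m + 1) hml])
    simp [h01] at h

lemma exists_rho_eq_neg_rho_zero : ∃ j, F.ρ j = -F.ρ 0 := by
  obtain ⟨j, c, hc, hj⟩ := exists_nonneg_smul_rho_eq (not_inOpenCone_neg_rho_zero hb0 hl)
  have h01 := F.smooth_ccw 0
  rw [zero_add] at h01
  have hc1 : c * det2 (F.ρ j) (F.ρ 1) = -1 := by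
    rw [← det2_smul_left, ← hj, det2_neg_left, h01]
  obtain rfl : c = 1 := (Int.eq_one_or_neg_one_of_mul_eq_neg_one hc1).resolve_right (by omega)
  exact ⟨j, by rw [hj, one_smul]⟩

end SmoothCompleteFan

/-- If `b 0 < 0` and `l > 2`, there is a unique index `α` with `1 < α < l` and
`ρ α = -ρ 0`. -/
theorem exists_unique_opposite_ray (l : ℕ) (hl : 2 < l) (F : SmoothCompleteFan l)
    (hb0 : F.b 0 < 0) :
    ∃! α : ℕ, 1 < α ∧ α < l ∧ F.ρ (α : ZMod (l + 1)) = - F.ρ 0 := by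
  obtain ⟨j, hj⟩ := SmoothCompleteFan.exists_rho_eq_neg_rho_zero hb0 hl
  obtain ⟨hj0, hj1, hjl⟩ := F.ne_of_rho_eq_neg hj
  rw [zero_add] at hj1
  refine ⟨j.val, ⟨ZMod.one_lt_val_of_ne hj0 hj1, ZMod.val_lt_of_add_one_ne_zero hjl,
    by rwa [ZMod.natCast_zmod_val]⟩, ?_⟩
  rintro α ⟨-, hαl, hα⟩
  rw [← F.inj (hα.trans hj.symm), ZMod.val_cast_of_lt (by omega)]
end

section
/- There do not exist integers $n \geq 1$, $u_0^l, v_0^l, u_\infty^l, v_\infty^l, u_0^r, v_0^r, u_\infty^r, v_\infty^r$ with $v_0^l, v_\infty^l, v_0^r, v_\infty^r \geq 2$ satisfying all of: (1) $-u_0^l v_\infty^l - u_\infty^l v_0^l = 1$; (2) $u_0^r v_\infty^r + u_\infty^r v_0^r + v_0^r v_\infty^r n = 1$; (3) $u_0^l v_0^r \leq u_0^r v_0^l$; (4) $u_\infty^l v_\infty^r \leq u_\infty^r v_\infty^l$. -/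
/-!
Read `u/v` as fractions: the equations say `u0l/v0l + uil/vil = -1/(v0l vil)` and
`u0r/v0r + uir/vir = 1/(v0r vir) - n`, and the inequalities say the left fractions lie below
the right ones. Adding them gives `n ≤ 1/(v0l vil) + 1/(v0r vir) ≤ 1/2`, contradicting `n ≥ 1`.
Everything is done after clearing denominators.
-/

/-- Adding `a/p ≤ c/q` and `b/r ≤ d/s`, with denominators cleared. -/
theorem cross_mul_add_le {R : Type*} [CommRing R] [PartialOrder R] [IsOrderedRing R]
    {a b c d p q r s : R} (hp : 0 ≤ p) (hq : 0 ≤ q) (hr : 0 ≤ r) (hs : 0 ≤ s)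
    (hac : a * q ≤ c * p) (hbd : b * s ≤ d * r) :
    (a * r + b * p) * (q * s) ≤ (c * s + d * q) * (p * r) := by
  have h₁ := mul_le_mul_of_nonneg_right hac (mul_nonneg hr hs)
  have h₂ := mul_le_mul_of_nonneg_right hbd (mul_nonneg hp hq)
  linear_combination h₁ + h₂

theorem Int.add_lt_mul_of_three_le {A B : ℤ} (hA : 3 ≤ A) (hB : 3 ≤ B) : A + B < A * B := by
  nlinarith

/-- The key arithmetic impossibility in the proof that every smooth rational
`ℂ*`-surface homogeneously degenerates to a toric surface: there are no integers
`n ≥ 1` and `u`'s and `v`'s with all `v`'s at least `2` satisfying the two smoothness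
equations and the two ordering inequalities. -/
theorem no_such_integers :
    ¬ ∃ (n u0l v0l uil vil u0r v0r uir vir : ℤ),
      1 ≤ n ∧ 2 ≤ v0l ∧ 2 ≤ vil ∧ 2 ≤ v0r ∧ 2 ≤ vir ∧
      (-u0l * vil - uil * v0l = 1) ∧
      (u0r * vir + uir * v0r + v0r * vir * n = 1) ∧
      u0l * v0r ≤ u0r * v0l ∧
      uil * vir ≤ uir * vil := by
  rintro ⟨n, u0l, v0l, uil, vil, u0r, v0r, uir, vir, hn, h0l, hil, h0r, hir, eql, eqr, le0, lei⟩
  have sum_le := cross_mul_add_le (by positivity) (by positivity) (by positivity) (by positivity)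
    le0 lei
  rw [show u0l * vil + uil * v0l = -1 by linarith,
    show u0r * vir + uir * v0r = 1 - v0r * vir * n by linarith] at sum_le
  have hA : 3 ≤ v0l * vil := by nlinarith
  have hB : 3 ≤ v0r * vir := by nlinarith
  have hAB : v0l * vil * (v0r * vir) ≤ v0l * vil * (v0r * vir) * n :=
    le_mul_of_one_le_right (by positivity) hn
  linarith [Int.add_lt_mul_of_three_le hA hB]
end

section
/- On the Hirzebruch surface $\mathcal{F}_r$ (Picard lattice with basis $P,Q$, $P^2=0$, $P\cdot Q=1$, $Q^2=r$, $-K=2Q+(2-r)P$), every toric system $(A_1,A_2,A_3,A_4)$ is, up to cyclic permutation and reflection of the indices, equal to $\mathcal{A}_{r,i} = (P, iP+Q, P, -(r+i)P+Q)$ for some $i\in\mathbb{Z}$, or (when $r$ is even) to $\tilde{\mathcal{A}}_{r,i} = (-\frac{r}{2}P+Q, P+i(-\frac{r}{2}P+Q), -\frac{r}{2}P+Q, P-i(-\frac{r}{2}P+Q))$ for some $i\in\mathbb{Z}$. -/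
/-- The Picard lattice of the Hirzebruch surface `𝔽_r` is `ℤ²`, where `(p, q)`
represents `pP + qQ`; the intersection form is determined by `P² = 0`, `P·Q = 1`,
`Q² = r`. -/
def hirzForm (r : ℤ) (v w : ℤ × ℤ) : ℤ := v.1 * w.2 + v.2 * w.1 + r * v.2 * w.2

/-- The anticanonical class `-K = (2-r)P + 2Q` of `𝔽_r`. -/
def hirzNegK (r : ℤ) : ℤ × ℤ := (2 - r, 2)

/-- A toric system on `𝔽_r`: a 4-tuple of divisor classes with cyclically adjacent
intersection numbers `1`, non-adjacent intersection numbers `0`, summing to `-K`. -/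
def IsToricSystemF (r : ℤ) (A : Fin 4 → ℤ × ℤ) : Prop :=
  hirzForm r (A 0) (A 1) = 1 ∧ hirzForm r (A 1) (A 2) = 1 ∧
  hirzForm r (A 2) (A 3) = 1 ∧ hirzForm r (A 3) (A 0) = 1 ∧
  hirzForm r (A 0) (A 2) = 0 ∧ hirzForm r (A 1) (A 3) = 0 ∧
  A 0 + A 1 + A 2 + A 3 = hirzNegK r

/-- The toric system `𝒜_{r,i} = (P, iP+Q, P, -(r+i)P+Q)` on `𝔽_r`. -/
def ATS (r i : ℤ) : Fin 4 → ℤ × ℤ := ![(1, 0), (i, 1), (1, 0), (-(r + i), 1)]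

/-- The toric system `Ã_{r,i}` on `𝔽_r` for even `r = 2m`. -/
def tATS (m i : ℤ) : Fin 4 → ℤ × ℤ :=
  ![(-m, 1), (1, 0) + i • ((-m : ℤ), (1 : ℤ)), (-m, 1), (1, 0) - i • ((-m : ℤ), (1 : ℤ))]

/-- Two 4-tuples agree up to cyclic permutation or reflection of the indices
(addition and subtraction on `Fin 4` being cyclic). -/
def SameUpToDihedral (A B : Fin 4 → ℤ × ℤ) : Prop :=
  ∃ k : Fin 4, (∀ j, A j = B (j + k)) ∨ (∀ j, A j = B (k - j))

/-! Over `ℚ` the intersection form of `𝔽_r` is hyperbolic, with isotropic basis `P`,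
`D = Q - (r/2) P` and `-K = 2P + 2D`. In these coordinates adjunction `A² + K·A = -2` reads
`(x - 1)(y - 1) = 0`, so every member of a toric system lies on the line `x = 1` or `y = 1`.
Comparing the lines through two opposite members, the intersection numbers force some opposite
pair to be `P, P` or `D, D`, and then the system is `(P, tP + D, P, -tP + D)` or its image under
`P ↔ D`. Integrality of the members gives `t ∈ ℤ + r/2`, resp. `r` even and `t ∈ ℤ`. -/

variable {K : Type*} [CommRing K]

/-- `(x, y)` stands for `x P + y D`, with `P`, `D` isotropic and `P · D = 1`. -/
def hypForm (v w : K × K) : K := v.1 * w.2 + v.2 * w.1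

theorem hypForm_comm (v w : K × K) : hypForm v w = hypForm w v := by
  unfold hypForm; ring

theorem hypForm_swap (v w : K × K) : hypForm v.swap w.swap = hypForm v w := by
  unfold hypForm; simp only [Prod.fst_swap, Prod.snd_swap]; ring

structure IsHypToricSystem (v : Fin 4 → K × K) : Prop where
  adjacent : ∀ i, hypForm (v i) (v (i + 1)) = 1
  opposite : ∀ i, hypForm (v i) (v (i + 2)) = 0
  sum_eq : ∑ i, v i = (2, 2)

def hypStdSystem (t : K) : Fin 4 → K × K := ![(1, 0), (t, 1), (1, 0), (-t, 1)]

theorem eq_one_zero_or_eq_zero_one_of_hypForm_eq_one [IsDomain K] {a b c : K × K}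
    (ha : a.1 = 1) (hc : c.2 = 1) (hac : hypForm a c = 0) (hb : b.1 = 1 ∨ b.2 = 1)
    (hab : hypForm a b = 1) (hbc : hypForm b c = 1) : b = (1, 0) ∨ b = (0, 1) := by
  unfold hypForm at hac hab hbc
  rw [ha] at hac hab
  rw [hc] at hac hbc
  have ha2 : a.2 ≠ 0 := by rintro h; simp [h] at hac
  have hc1 : c.1 ≠ 0 := by rintro h; simp [h] at hac
  rcases hb with hb | hb
  · have : b.2 * c.1 = 0 := by linear_combination hbc - hb
    exact Or.inl (Prod.ext hb ((mul_eq_zero.1 this).resolve_right hc1))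
  · have : a.2 * b.1 = 0 := by linear_combination hab - hb
    exact Or.inr (Prod.ext ((mul_eq_zero.1 this).resolve_left ha2) hb)

namespace IsHypToricSystem

variable {v : Fin 4 → K × K}

theorem rotate (h : IsHypToricSystem v) (k : Fin 4) : IsHypToricSystem (fun j => v (j + k)) where
  adjacent i := by simpa only [add_right_comm] using h.adjacent (i + k)
  opposite i := by simpa only [add_right_comm] using h.opposite (i + k)
  sum_eq := by rw [← h.sum_eq]; exact Fintype.sum_equiv (Equiv.addRight k) _ _ fun _ => rfl

theorem swap (h : IsHypToricSystem v) : IsHypToricSystem (fun j => (v j).swap) where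
  adjacent i := by rw [hypForm_swap]; exact h.adjacent i
  opposite i := by rw [hypForm_swap]; exact h.opposite i
  sum_eq := by simpa [Prod.ext_iff, Prod.fst_sum, Prod.snd_sum, and_comm] using h.sum_eq

theorem sum_fst (h : IsHypToricSystem v) : (v 0).1 + (v 1).1 + (v 2).1 + (v 3).1 = 2 := by
  simpa [Fin.sum_univ_four] using congrArg Prod.fst h.sum_eq

theorem sum_snd (h : IsHypToricSystem v) : (v 0).2 + (v 1).2 + (v 2).2 + (v 3).2 = 2 := by
  simpa [Fin.sum_univ_four] using congrArg Prod.snd h.sum_eq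

/-- Adjunction: `A · (-K) = A² + 2` for each member `A` of a toric system. -/
theorem fst_eq_one_or_snd_eq_one [IsDomain K] [NeZero (2 : K)] (h : IsHypToricSystem v)
    (i : Fin 4) : (v i).1 = 1 ∨ (v i).2 = 1 := by
  suffices ∀ w : Fin 4 → K × K, IsHypToricSystem w → (w 0).1 = 1 ∨ (w 0).2 = 1 by
    simpa using this _ (h.rotate i)
  intro w hw
  have h01 : hypForm (w 0) (w 1) = 1 := hw.adjacent 0
  have h30 : hypForm (w 3) (w 0) = 1 := hw.adjacent 3
  have h02 : hypForm (w 0) (w 2) = 0 := hw.opposite 0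
  have hx := hw.sum_fst
  have hy := hw.sum_snd
  unfold hypForm at h01 h30 h02
  have : 2 * (((w 0).1 - 1) * ((w 0).2 - 1)) = 0 := by
    linear_combination (w 0).1 * hy + (w 0).2 * hx - h01 - h30 - h02
  simpa [sub_eq_zero, two_ne_zero] using this

theorem eq_of_fst_eq_one_of_snd_eq_one [IsDomain K] [NeZero (2 : K)] (h : IsHypToricSystem v)
    (h0 : (v 0).1 = 1) (h2 : (v 2).2 = 1) :
    (v 1 = (1, 0) ∧ v 3 = (1, 0)) ∨ (v 1 = (0, 1) ∧ v 3 = (0, 1)) := by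
  have h02 : hypForm (v 0) (v 2) = 0 := h.opposite 0
  have h13 : hypForm (v 1) (v 3) = 0 := h.opposite 1
  have h03 : hypForm (v 0) (v 3) = 1 := hypForm_comm (v 0) (v 3) ▸ h.adjacent 3
  have h32 : hypForm (v 3) (v 2) = 1 := hypForm_comm (v 3) (v 2) ▸ h.adjacent 2
  have hv1 := eq_one_zero_or_eq_zero_one_of_hypForm_eq_one h0 h2 h02
    (h.fst_eq_one_or_snd_eq_one 1) (h.adjacent 0) (h.adjacent 1)
  have hv3 := eq_one_zero_or_eq_zero_one_of_hypForm_eq_one h0 h2 h02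
    (h.fst_eq_one_or_snd_eq_one 3) h03 h32
  rcases hv1 with hv1 | hv1 <;> rcases hv3 with hv3 | hv3 <;>
    simp_all [hypForm]

theorem eq_of_fst_eq_one_of_fst_eq_one [IsDomain K] [NeZero (2 : K)] (h : IsHypToricSystem v)
    (h0 : (v 0).1 = 1) (h2 : (v 2).1 = 1) :
    (v 0 = (1, 0) ∧ v 2 = (1, 0)) ∨ (v 1 = (0, 1) ∧ v 3 = (0, 1)) := by
  have h01 : hypForm (v 0) (v 1) = 1 := h.adjacent 0
  have h12 : hypForm (v 1) (v 2) = 1 := h.adjacent 1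
  have h23 : hypForm (v 2) (v 3) = 1 := h.adjacent 2
  have h30 : hypForm (v 3) (v 0) = 1 := h.adjacent 3
  have h02 : hypForm (v 0) (v 2) = 0 := h.opposite 0
  simp only [hypForm, h0, h2] at h01 h12 h23 h30 h02
  have hy2 : (v 2).2 = -(v 0).2 := by linear_combination h02
  have hy1 : (v 1).2 = 1 := by
    have : 2 * ((v 1).2 - 1) = 0 := by linear_combination h01 + h12 - (v 1).1 * h02
    simpa [sub_eq_zero, two_ne_zero] using this
  have hy3 : (v 3).2 = 1 := by
    have : 2 * ((v 3).2 - 1) = 0 := by linear_combination h23 + h30 - (v 3).1 * h02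
    simpa [sub_eq_zero, two_ne_zero] using this
  have hx1 : (v 0).2 * (v 1).1 = 0 := by linear_combination h01 - hy1
  have hx3 : (v 3).1 * (v 0).2 = 0 := by linear_combination h30 - hy3
  by_cases hy0 : (v 0).2 = 0
  · exact Or.inl ⟨Prod.ext h0 hy0, Prod.ext h2 (by simp [hy2, hy0])⟩
  · refine Or.inr ⟨Prod.ext ?_ hy1, Prod.ext ?_ hy3⟩
    · exact (mul_eq_zero.1 hx1).resolve_left hy0
    · exact (mul_eq_zero.1 hx3).resolve_right hy0

theorem exists_opposite_eq [IsDomain K] [NeZero (2 : K)] (h : IsHypToricSystem v) :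
    ∃ k, (v k = (1, 0) ∧ v (k + 2) = (1, 0)) ∨ (v k = (0, 1) ∧ v (k + 2) = (0, 1)) := by
  rcases h.fst_eq_one_or_snd_eq_one 0 with h0 | h0 <;>
    rcases h.fst_eq_one_or_snd_eq_one 2 with h2 | h2
  · rcases h.eq_of_fst_eq_one_of_fst_eq_one h0 h2 with hP | hD
    exacts [⟨0, Or.inl hP⟩, ⟨1, Or.inr hD⟩]
  · exact ⟨1, h.eq_of_fst_eq_one_of_snd_eq_one h0 h2⟩
  · exact ⟨3, (h.rotate 2).eq_of_fst_eq_one_of_snd_eq_one h2 h0⟩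
  · rcases h.swap.eq_of_fst_eq_one_of_fst_eq_one h0 h2 with hD | hP
    · exact ⟨0, Or.inr (by simpa [Prod.swap_eq_iff_eq_swap] using hD)⟩
    · exact ⟨1, Or.inl (by simpa [Prod.swap_eq_iff_eq_swap] using hP)⟩

theorem eq_hypStdSystem (h : IsHypToricSystem v) (h0 : v 0 = (1, 0)) (h2 : v 2 = (1, 0))
    (j : Fin 4) : v j = hypStdSystem (v 1).1 j := by
  have h01 : hypForm (v 0) (v 1) = 1 := h.adjacent 0
  have h23 : hypForm (v 2) (v 3) = 1 := h.adjacent 2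
  have hx := h.sum_fst
  simp only [hypForm, h0, h2] at h01 h23 hx
  fin_cases j
  · exact h0
  · exact Prod.ext rfl (by simpa [hypStdSystem] using h01)
  · exact h2
  · refine Prod.ext ?_ (by simpa [hypStdSystem] using h23)
    simp only [hypStdSystem, Matrix.cons_val, Fin.reduceFinMk]
    linear_combination hx

theorem exists_rotate_eq [IsDomain K] [NeZero (2 : K)] (h : IsHypToricSystem v) :
    ∃ k : Fin 4, ∃ t : K, (∀ j, v (j + k) = hypStdSystem t j) ∨
      (∀ j, v (j + k) = (hypStdSystem t j).swap) := by
  obtain ⟨k, ⟨h0, h2⟩ | ⟨h0, h2⟩⟩ := h.exists_opposite_eq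
  · refine ⟨k, _, Or.inl ((h.rotate k).eq_hypStdSystem ?_ ?_)⟩
    · simpa using h0
    · simpa [add_comm] using h2
  · refine ⟨k, (v (1 + k)).2, Or.inr fun j => ?_⟩
    rw [← Prod.swap_eq_iff_eq_swap]
    refine (h.rotate k).swap.eq_hypStdSystem ?_ ?_ j
    · simp [h0]
    · simp [add_comm, h2]

end IsHypToricSystem

/-- `pP + qQ = (p + rq/2) P + q D` in the basis `P`, `D = Q - (r/2) P`. -/
def hirzToHyp (r : ℤ) (v : ℤ × ℤ) : ℚ × ℚ := (v.1 + r * v.2 / 2, v.2)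

theorem hirzToHyp_eq_mk_iff {r : ℤ} {v : ℤ × ℤ} {x y : ℚ} :
    hirzToHyp r v = (x, y) ↔ v.1 + r * v.2 / 2 = x ∧ (v.2 : ℚ) = y :=
  Prod.mk_inj

theorem hirzToHyp_injective (r : ℤ) : Function.Injective (hirzToHyp r) := by
  intro v w hvw
  simp only [hirzToHyp, Prod.mk.injEq] at hvw
  obtain ⟨h1, h2⟩ := hvw
  rw [h2, add_left_inj] at h1
  exact Prod.ext (by exact_mod_cast h1) (by exact_mod_cast h2)

theorem hirzToHyp_add (r : ℤ) (v w : ℤ × ℤ) :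
    hirzToHyp r (v + w) = hirzToHyp r v + hirzToHyp r w := by
  simp only [hirzToHyp, Prod.fst_add, Prod.snd_add, Int.cast_add, Prod.mk_add_mk]
  congr 1; ring

theorem hirzForm_comm (r : ℤ) (v w : ℤ × ℤ) : hirzForm r v w = hirzForm r w v := by
  unfold hirzForm; ring

theorem hypForm_hirzToHyp (r : ℤ) (v w : ℤ × ℤ) :
    hypForm (hirzToHyp r v) (hirzToHyp r w) = hirzForm r v w := by
  simp only [hypForm, hirzToHyp, hirzForm]; push_cast; ring

theorem isHypToricSystem_hirzToHyp {r : ℤ} {A : Fin 4 → ℤ × ℤ} (hA : IsToricSystemF r A) :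
    IsHypToricSystem fun j => hirzToHyp r (A j) := by
  obtain ⟨h01, h12, h23, h30, h02, h13, hsum⟩ := hA
  refine ⟨fun i => ?_, fun i => ?_, ?_⟩
  · fin_cases i <;> simp [hypForm_hirzToHyp, h01, h12, h23, h30]
  · fin_cases i <;>
      simp [hypForm_hirzToHyp, hirzForm_comm r _ (A 0), hirzForm_comm r _ (A 1), h02, h13]
  · rw [Fin.sum_univ_four, ← hirzToHyp_add, ← hirzToHyp_add, ← hirzToHyp_add, hsum]
    norm_num [hirzToHyp, hirzNegK]

theorem hirzToHyp_ATS (r i : ℤ) (j : Fin 4) :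
    hirzToHyp r (ATS r i j) = hypStdSystem ((i : ℚ) + r / 2) j := by
  fin_cases j <;> simp [hirzToHyp, ATS, hypStdSystem]; ring

theorem hirzToHyp_tATS (m i : ℤ) (j : Fin 4) :
    hirzToHyp (2 * m) (tATS m i j) = (hypStdSystem (i : ℚ) j).swap := by
  fin_cases j <;> simp [hirzToHyp, tATS, hypStdSystem] <;> ring

theorem sameUpToDihedral_of_forall_add_eq {A B : Fin 4 → ℤ × ℤ} {k : Fin 4}
    (h : ∀ j, A (j + k) = B j) : SameUpToDihedral A B :=
  ⟨-k, Or.inl fun j => by simpa [sub_eq_add_neg] using h (j - k)⟩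

/-- Every toric system on the Hirzebruch surface `𝔽_r` is, up to cyclic permutation and
reflection, of the form `𝒜_{r,i}`, or (when `r = 2m` is even) of the form `Ã_{r,i}`. -/
theorem toricSystemF_classification (r : ℤ) (A : Fin 4 → ℤ × ℤ)
    (hA : IsToricSystemF r A) :
    (∃ i : ℤ, SameUpToDihedral A (ATS r i)) ∨
    (∃ m i : ℤ, r = 2 * m ∧ SameUpToDihedral A (tATS m i)) := by
  obtain ⟨k, t, hP | hD⟩ := (isHypToricSystem_hirzToHyp hA).exists_rotate_eq
  · have hP1 : hirzToHyp r (A (1 + k)) = (t, 1) := hP 1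
    obtain ⟨hx, hy⟩ := hirzToHyp_eq_mk_iff.1 hP1
    obtain rfl : t = (A (1 + k)).1 + r / 2 := by rw [← hx, hy, mul_one]
    exact Or.inl ⟨_, sameUpToDihedral_of_forall_add_eq fun j =>
      hirzToHyp_injective r (by rw [hP, hirzToHyp_ATS])⟩
  · have hD0 : hirzToHyp r (A k) = (0, 1) := by simpa [hypStdSystem] using hD 0
    obtain ⟨hx, hy⟩ := hirzToHyp_eq_mk_iff.1 hD0
    obtain ⟨m, rfl⟩ : ∃ m : ℤ, r = 2 * m := ⟨-(A k).1, by
      rw [hy, mul_one] at hx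
      exact_mod_cast (by linarith : (r : ℚ) = 2 * -(A k).1)⟩
    have hD1 : hirzToHyp (2 * m) (A (1 + k)) = (1, t) := hD 1
    obtain rfl : t = (A (1 + k)).2 := (hirzToHyp_eq_mk_iff.1 hD1).2.symm
    exact Or.inr ⟨m, _, rfl, sameUpToDihedral_of_forall_add_eq fun j =>
      hirzToHyp_injective _ (by rw [hD, hirzToHyp_tATS])⟩
end

section
/- Let $X$ be a rational surface and $\phi: \tilde{X} \to X$ a blowup at one point with exceptional divisor $R$, so $\mathrm{Pic}(\tilde{X}) = \phi^*\mathrm{Pic}(X) \oplus \mathbb{Z}R$ with $R^2 = -1$, $R \cdot \phi^*D = 0$ for all $D$, and $K_{\tilde{X}} = \phi^* K_X + R$. If $\mathcal{A} = (A_1,\ldots,A_n)$ is a toric system on $X$, then for each $1 \leq i \leq n$, the augmentation $\mathrm{Aug}_i\mathcal{A} = (A_1,\ldots,A_{i-1}, A_i - R, R, A_{i+1} - R, A_{i+2},\ldots,A_n)$ (classes pulled back via $\phi^*$, indices cyclic) is a toric system on $\tilde{X}$. -/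
/-!
Rotating the indices turns the augmentation at position `i` into the augmentation
`(A₀ - R, A₁, …, A_{n-2}, A_{n-1} - R, R)` of a rotated toric system, with `R` in last position.
For the latter every intersection number is read off directly: `R` meets its two neighbours
`A_{n-1} - R` and `A₀ - R` in `1` and all other entries in `0`; the two modified classes, no
longer adjacent once `n ≥ 3`, meet in `A_{n-1} · A₀ - 1 = 0`; all remaining numbers are those of
`A`. The classes add up to `-K_X - R = -K_X̃`.
-/

/-- A toric system of length `n` on a surface with Picard group `V` (a free abelian
group), intersection form `form` and anticanonical class `negK`: cyclically adjacent
classes meet in `1`, non-adjacent classes meet in `0`, and the classes sum to `-K`. -/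
def IsToricSystem {V : Type*} [AddCommGroup V] (form : V → V → ℤ) (negK : V)
    (n : ℕ) [NeZero n] (A : ZMod n → V) : Prop :=
  (∀ i : ZMod n, form (A i) (A (i + 1)) = 1) ∧
  (∀ i j : ZMod n, j ≠ i - 1 → j ≠ i → j ≠ i + 1 → form (A i) (A j) = 0) ∧
  (∑ i : ZMod n, A i) = negK

open Finset

namespace ZMod

theorem natCast_eq_natCast_iff_of_lt {m k l : ℕ} (hk : k < m) (hl : l < m) :
    (k : ZMod m) = l ↔ k = l := by
  refine ⟨fun h => ?_, congrArg _⟩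
  simpa [val_cast_of_lt hk, val_cast_of_lt hl] using congrArg val h

theorem natCast_eq_natCast_add_one_iff {m k l : ℕ} (hk : k < m) (hl : l < m) :
    (l : ZMod m) = k + 1 ↔ l = k + 1 ∨ (k + 1 = m ∧ l = 0) := by
  rw [← Nat.cast_succ]
  rcases (Nat.succ_le_of_lt hk).lt_or_eq with hk' | hk'
  · rw [natCast_eq_natCast_iff_of_lt hl hk']
    omega
  · rw [hk', natCast_self, ← Nat.cast_zero, natCast_eq_natCast_iff_of_lt hl (by omega)]
    omega

theorem natCast_eq_natCast_of_eq_add {m a b : ℕ} (h : a = b + m) : (a : ZMod m) = b := by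
  rw [h, Nat.cast_add, natCast_self, add_zero]

theorem sum_univ_eq_sum_range {M : Type*} [AddCommMonoid M] (m : ℕ) [NeZero m]
    (f : ZMod m → M) : ∑ t, f t = ∑ k ∈ range m, f k :=
  (sum_nbij' (fun k : ℕ => (k : ZMod m)) val (fun _ _ => mem_univ _)
    (fun t _ => mem_range.2 t.val_lt) (fun _ hk => val_cast_of_lt (mem_range.1 hk))
    (fun t _ => natCast_zmod_val t)
    (fun _ _ => rfl)).symm

end ZMod

section

variable {W : Type*} [AddCommGroup W] {form : W → W → ℤ} {negK : W} {m : ℕ} [NeZero m]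

theorem isToricSystem_iff_nat {f : ZMod m → W} :
    IsToricSystem form negK m f ↔
      (∀ k, k + 1 < m → form (f k) (f (k + 1 : ℕ)) = 1) ∧ form (f (m - 1 : ℕ)) (f 0) = 1 ∧
      (∀ k l, k < m → l < m →
        ¬(l = k ∨ l = k + 1 ∨ k = l + 1 ∨ (k = 0 ∧ l + 1 = m) ∨ (l = 0 ∧ k + 1 = m)) →
        form (f k) (f l) = 0) ∧
      ∑ k ∈ range m, f k = negK := by
  have hm : 0 < m := Nat.pos_of_neZero m
  have wrap : ((m - 1 : ℕ) : ZMod m) + 1 = 0 := by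
    rw [← Nat.cast_add_one, Nat.sub_add_cancel hm, ZMod.natCast_self]
  have near : ∀ k l, k < m → l < m →
      ((l : ZMod m) = k - 1 ∨ (l : ZMod m) = k ∨ (l : ZMod m) = k + 1 ↔
        l = k ∨ l = k + 1 ∨ k = l + 1 ∨ (k = 0 ∧ l + 1 = m) ∨ (l = 0 ∧ k + 1 = m)) := by
    intro k l hk hl
    rw [eq_sub_iff_add_eq, eq_comm, ZMod.natCast_eq_natCast_add_one_iff hl hk,
      ZMod.natCast_eq_natCast_iff_of_lt hl hk, ZMod.natCast_eq_natCast_add_one_iff hk hl]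
    omega
  rw [IsToricSystem, ZMod.sum_univ_eq_sum_range]
  constructor
  · rintro ⟨hadj, horth, hsum⟩
    refine ⟨fun k _ => by simpa using hadj k, by simpa [wrap] using hadj (m - 1 : ℕ),
      fun k l hk hl hkl => ?_, hsum⟩
    have := near k l hk hl
    exact horth _ _ (fun h => hkl (this.1 (.inl h))) (fun h => hkl (this.1 (.inr (.inl h))))
      (fun h => hkl (this.1 (.inr (.inr h))))
  · rintro ⟨hadj, hwrap, horth, hsum⟩
    refine ⟨fun t => ?_, fun t u h₁ h₂ h₃ => ?_, hsum⟩
    · rw [← ZMod.natCast_zmod_val t]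
      rcases (Nat.succ_le_of_lt t.val_lt).lt_or_eq with ht | ht
      · simpa using hadj _ ht
      · rw [show t.val = m - 1 by omega, wrap]
        exact hwrap
    · rw [← ZMod.natCast_zmod_val t, ← ZMod.natCast_zmod_val u] at *
      exact horth _ _ t.val_lt u.val_lt fun h => by
        rcases (near _ _ t.val_lt u.val_lt).2 h with h | h | h <;> contradiction

theorem IsToricSystem.rotate {f : ZMod m → W} (hf : IsToricSystem form negK m f) (c : ZMod m) :
    IsToricSystem form negK m (fun t => f (c + t)) := by
  obtain ⟨hadj, horth, hsum⟩ := hf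
  refine ⟨fun t => by simpa only [add_assoc] using hadj (c + t), fun t u h₁ h₂ h₃ => ?_, ?_⟩
  · apply horth
    · rwa [ne_eq, add_sub_assoc, add_right_inj]
    · rwa [ne_eq, add_right_inj]
    · rwa [ne_eq, add_assoc, add_right_inj]
  · rw [← hsum]
    exact Equiv.sum_comp (Equiv.addLeft c) f

theorem isToricSystem_rotate_iff {f : ZMod m → W} (c : ZMod m) :
    IsToricSystem form negK m (fun t => f (c + t)) ↔ IsToricSystem form negK m f :=
  ⟨fun h => by simpa using h.rotate (-c), fun h => h.rotate c⟩

end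

section Augmentation

variable {V : Type*} [AddCommGroup V] {n : ℕ}

/-- `(v, a)` stands for `φ^* v + a R`. -/
def blowupForm (form : V → V → ℤ) (x y : V × ℤ) : ℤ := form x.1 y.1 - x.2 * y.2

/-- `(A₀ - R, A₁, …, A_{n-2}, A_{n-1} - R, R)`. -/
def augmentLast (A : ZMod n → V) (t : ZMod (n + 1)) : V × ℤ :=
  if t.val = n then (0, 1) else (A t.val, if t.val = 0 ∨ t.val + 1 = n then -1 else 0)

theorem augmentLast_natCast (A : ZMod n → V) {k : ℕ} (hk : k < n) :
    augmentLast A k = (A k, if k = 0 ∨ k + 1 = n then -1 else 0) := by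
  rw [augmentLast, ZMod.val_cast_of_lt (by omega), if_neg hk.ne]

theorem augmentLast_natCast_self (A : ZMod n → V) : augmentLast A n = (0, 1) := by
  rw [augmentLast, ZMod.val_cast_of_lt n.lt_succ_self, if_pos rfl]

theorem blowupForm_augmentLast_natCast {form : V → V → ℤ} (A : ZMod n → V) {k l : ℕ}
    (hk : k < n) (hl : l < n) (hkl : ¬((k = 0 ∨ k + 1 = n) ∧ (l = 0 ∨ l + 1 = n))) :
    blowupForm form (augmentLast A k) (augmentLast A l) = form (A k) (A l) := by
  rw [augmentLast_natCast A hk, augmentLast_natCast A hl, blowupForm]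
  split_ifs <;> simp_all

theorem sum_augmentLast (A : ZMod n → V) (hn : 2 ≤ n) [NeZero n] :
    ∑ t, augmentLast A t = (∑ r, A r, -1) := by
  rw [ZMod.sum_univ_eq_sum_range, ZMod.sum_univ_eq_sum_range, sum_range_succ,
    augmentLast_natCast_self, sum_congr rfl fun k hk => augmentLast_natCast A (mem_range.1 hk)]
  obtain ⟨m, rfl⟩ : ∃ m, n = m + 2 := ⟨n - 2, by omega⟩
  ext
  · simp [Prod.fst_sum]
  · rw [Prod.snd_add, Prod.snd_sum, sum_range_succ, sum_range_succ', sum_eq_zero fun k hk => ?_]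
    · simp
    · rw [if_neg (by rw [mem_range] at hk; omega)]

theorem IsToricSystem.augmentLast [NeZero n] {form : V → V → ℤ} {negK : V} {A : ZMod n → V}
    (hA : IsToricSystem form negK n A) (hn : 3 ≤ n) (hsymm : ∀ v w, form v w = form w v)
    (hadd : ∀ u v w, form (u + v) w = form u w + form v w) :
    IsToricSystem (blowupForm form) (negK, -1) (n + 1) (augmentLast A) := by
  have zero_left : ∀ v, form 0 v = 0 := fun v => by simpa using hadd 0 0 v
  have zero_right : ∀ v, form v 0 = 0 := fun v => by rw [hsymm, zero_left]
  obtain ⟨hadj, hwrap, horth, hsum⟩ := isToricSystem_iff_nat.1 hA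
  refine isToricSystem_iff_nat.2 ⟨fun k hk => ?_, ?_, fun k l hk hl hkl => ?_, ?_⟩
  · rcases (Nat.succ_le_of_lt hk).lt_or_eq with hk' | hk'
    · rw [blowupForm_augmentLast_natCast A (by omega) (by omega) (by omega)]
      exact hadj k (by omega)
    · obtain rfl : n = k + 1 := by omega
      rw [augmentLast_natCast A k.lt_succ_self, augmentLast_natCast_self]
      simp [blowupForm, zero_right]
  · rw [Nat.add_sub_cancel, augmentLast_natCast_self, ← Nat.cast_zero,
      augmentLast_natCast A (by omega)]
    simp [blowupForm, zero_left]
  · rcases (Nat.le_of_lt_succ hk).lt_or_eq with hk' | rfl <;>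
      rcases (Nat.le_of_lt_succ hl).lt_or_eq with hl' | rfl
    · by_cases h₁ : k = 0 ∧ l + 1 = n
      · obtain ⟨rfl, rfl⟩ : k = 0 ∧ l = n - 1 := ⟨h₁.1, by omega⟩
        rw [augmentLast_natCast A hk', augmentLast_natCast A hl', if_pos (Or.inl rfl),
          if_pos (by omega)]
        simp only [blowupForm, Nat.cast_zero]
        rw [hsymm, hwrap]
        norm_num
      by_cases h₂ : l = 0 ∧ k + 1 = n
      · obtain ⟨rfl, rfl⟩ : k = n - 1 ∧ l = 0 := ⟨by omega, h₂.1⟩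
        rw [augmentLast_natCast A hk', augmentLast_natCast A hl', if_pos (by omega),
          if_pos (Or.inl rfl)]
        simp only [blowupForm, Nat.cast_zero]
        rw [hwrap]
        norm_num
      rw [blowupForm_augmentLast_natCast A hk' hl' (by omega)]
      exact horth k l hk' hl' (by omega)
    · rw [augmentLast_natCast A hk', augmentLast_natCast_self, blowupForm, if_neg (by omega)]
      simp [zero_right]
    · rw [augmentLast_natCast A hl', augmentLast_natCast_self, blowupForm, if_neg (by omega)]
      simp [zero_left]
    · omega
  · rw [← ZMod.sum_univ_eq_sum_range, sum_augmentLast A (by omega), ZMod.sum_univ_eq_sum_range,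
      hsum]

theorem rotate_eq_augmentLast {A : ZMod n → V} {A' : ZMod (n + 1) → V × ℤ} {i : ℕ}
    (h1 : ∀ j : ℕ, 1 ≤ j → j < i → A' (j : ZMod (n + 1)) = (A (j : ZMod n), 0))
    (h2 : A' (i : ZMod (n + 1)) = (A (i : ZMod n), -1))
    (h3 : A' ((i + 1 : ℕ) : ZMod (n + 1)) = (0, 1))
    (h4 : A' ((i + 2 : ℕ) : ZMod (n + 1)) = (A ((i + 1 : ℕ) : ZMod n), -1))
    (h5 : ∀ j : ℕ, i + 2 < j → j ≤ n + 1 →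
      A' (j : ZMod (n + 1)) = (A ((j - 1 : ℕ) : ZMod n), 0)) (t : ZMod (n + 1)) :
    A' (((i + 2 : ℕ) : ZMod (n + 1)) + t) =
      augmentLast (fun r => A (((i + 1 : ℕ) : ZMod n) + r)) t := by
  obtain ⟨k, hk, rfl⟩ : ∃ k < n + 1, (k : ZMod (n + 1)) = t :=
    ⟨t.val, t.val_lt, ZMod.natCast_zmod_val t⟩
  rw [← Nat.cast_add]
  by_cases hkR : k = n
  · rw [hkR, augmentLast_natCast_self,
      ZMod.natCast_eq_natCast_of_eq_add (show i + 2 + n = i + 1 + (n + 1) by omega), h3]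
  rw [augmentLast_natCast _ (by omega), ← Nat.cast_add]
  by_cases hk0 : k = 0
  · subst hk0
    rw [if_pos (Or.inl rfl), h4]
  by_cases hkn : k + 1 = n
  · rw [if_pos (Or.inr hkn),
      ZMod.natCast_eq_natCast_of_eq_add (show i + 2 + k = i + (n + 1) by omega), h2,
      ZMod.natCast_eq_natCast_of_eq_add (show i + 1 + k = i + n by omega)]
  rw [if_neg (by omega)]
  by_cases hwrap : i + 2 + k ≤ n + 1
  · rw [h5 _ (by omega) hwrap, show i + 2 + k - 1 = i + 1 + k by omega]
  · rw [ZMod.natCast_eq_natCast_of_eq_add (show i + 2 + k = (i + 1 + k - n) + (n + 1) by omega),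
      h1 _ (by omega) (by omega),
      ZMod.natCast_eq_natCast_of_eq_add (show i + 1 + k = (i + 1 + k - n) + n by omega)]

end Augmentation

theorem aug_isToricSystem_general {V : Type*} [AddCommGroup V] (form : V → V → ℤ)
    (hsymm : ∀ v w, form v w = form w v)
    (hadd : ∀ u v w, form (u + v) w = form u w + form v w)
    (negK : V) (n : ℕ) [NeZero n] (hn : 3 ≤ n)
    (A : ZMod n → V) (hA : IsToricSystem form negK n A)
    (i : ℕ)
    (A' : ZMod (n + 1) → V × ℤ)
    (h1 : ∀ j : ℕ, 1 ≤ j → j < i → A' (j : ZMod (n + 1)) = (A (j : ZMod n), 0))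
    (h2 : A' (i : ZMod (n + 1)) = (A (i : ZMod n), -1))
    (h3 : A' ((i + 1 : ℕ) : ZMod (n + 1)) = (0, 1))
    (h4 : A' ((i + 2 : ℕ) : ZMod (n + 1)) = (A ((i + 1 : ℕ) : ZMod n), -1))
    (h5 : ∀ j : ℕ, i + 2 < j → j ≤ n + 1 →
      A' (j : ZMod (n + 1)) = (A ((j - 1 : ℕ) : ZMod n), 0)) :
    IsToricSystem (fun x y => form x.1 y.1 - x.2 * y.2) (negK, -1) (n + 1) A' := by
  rw [← isToricSystem_rotate_iff ((i + 2 : ℕ) : ZMod (n + 1)),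
    funext (rotate_eq_augmentLast h1 h2 h3 h4 h5)]
  exact (hA.rotate _).augmentLast hn hsymm hadd

/-- Augmentation of a toric system is a toric system.  Here `Pic X̃ = Pic X ⊕ ℤR` is
modeled as `V × ℤ` with form `(v,a)·(w,b) = v·w - ab` (so `R² = -1`, `R ⟂ φ*Pic X`) and
anticanonical class `(-K, -1)` (i.e. `K_X̃ = φ*K_X + R`).  Given a toric system
`A = (A_1, …, A_n)` on `X` and a position `1 ≤ i ≤ n`, any `(n+1)`-tuple `A'` equal to
`(A_1, …, A_{i-1}, A_i - R, R, A_{i+1} - R, A_{i+2}, …, A_n)` (indices cyclic) is a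
toric system on `X̃`. -/
theorem aug_isToricSystem {V : Type*} [AddCommGroup V] (form : V → V → ℤ)
    (hsymm : ∀ v w, form v w = form w v)
    (hadd : ∀ u v w, form (u + v) w = form u w + form v w)
    (negK : V) (n : ℕ) [NeZero n] (hn : 3 ≤ n)
    (A : ZMod n → V) (hA : IsToricSystem form negK n A)
    (i : ℕ) (hi1 : 1 ≤ i) (hin : i ≤ n)
    (A' : ZMod (n + 1) → V × ℤ)
    (h1 : ∀ j : ℕ, 1 ≤ j → j < i → A' (j : ZMod (n + 1)) = (A (j : ZMod n), 0))
    (h2 : A' (i : ZMod (n + 1)) = (A (i : ZMod n), -1))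
    (h3 : A' ((i + 1 : ℕ) : ZMod (n + 1)) = (0, 1))
    (h4 : A' ((i + 2 : ℕ) : ZMod (n + 1)) = (A ((i + 1 : ℕ) : ZMod n), -1))
    (h5 : ∀ j : ℕ, i + 2 < j → j ≤ n + 1 →
      A' (j : ZMod (n + 1)) = (A ((j - 1 : ℕ) : ZMod n), 0)) :
    IsToricSystem (fun x y => form x.1 y.1 - x.2 * y.2) (negK, -1) (n + 1) A' :=
  aug_isToricSystem_general form hsymm hadd negK n hn A hA i A' h1 h2 h3 h4 h5
end

section
/- Let $X$ be a rational surface whose Picard lattice has a basis $(H, R_1, \ldots, R_n)$ diagonalizing the intersection form with signature $(1,-1,\ldots,-1)$ (i.e., $H^2 = 1$, $R_i^2 = -1$, all other products 0) and with $-K = 3H - \sum_i R_i$. If $\mathcal{A}$ and $\mathcal{A}'$ are two toric systems on $X$ with $A_i^2 = (A_i')^2$ for all $i$, then there is a lattice automorphism $\phi$ of $\mathrm{Pic}(X)$ preserving the intersection pairing and the canonical class with $\phi(A_i) = A_i'$ for all $i$. -/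
/-- The intersection form of a rational surface in an exceptional basis
`(H, R₁, …, R_n)`: `H² = 1`, `R_i² = -1`, all other products `0`. -/
def excForm (n : ℕ) (v w : Fin (n + 1) → ℤ) : ℤ :=
  v 0 * w 0 - ∑ i : Fin n, v i.succ * w i.succ

/-- The anticanonical class `-K = 3H - ∑ R_i` in the basis `(H, R₁, …, R_n)`. -/
def excNegK (n : ℕ) : Fin (n + 1) → ℤ := fun j => if j = 0 then 3 else -1

/-!
The classes `A₀, …, Aₙ` of a toric system form a `ℤ`-basis of the Picard lattice: their
pairing matrix with `A₁, …, Aₙ₊₁` is unitriangular (`Aᵢ · Aᵢ₊₁ = 1` and `Aᵢ · Aⱼ₊₁ = 0` for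
`i < j`), and a Gram determinant factors through the determinant of the family. Two toric
systems with the same self-intersections have the same Gram matrix, so the map sending one
basis to the other is an isometry `φ`. As the intersection form is nondegenerate, `φ Aᵢ` and
`A'ᵢ` are then equal for every `i`, having the same pairings with the basis `A'₀, …, A'ₙ`;
summing over `i` gives `φ (-K) = -K`.
-/

namespace Module.Basis

section Gram

variable {ι R M : Type*} [Fintype ι] [DecidableEq ι] [CommRing R] [AddCommGroup M] [Module R M]

/-- Both sides are alternating in `u`, so they agree up to the factor read off at `u = e`. -/
theorem det_gram_eq_mul_det (e : Basis ι R M) (B : M →ₗ[R] M →ₗ[R] R) (u v : ι → M) :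
    (Matrix.of fun i j => B (u i) (v j)).det =
      (Matrix.of fun i j => B (e i) (v j)).det * e.det u := by
  have h := congr($(AlternatingMap.eq_smul_basis_det e
    (Matrix.detRowAlternating.compLinearMap (LinearMap.pi fun j => B.flip (v j)))) u)
  simp only [AlternatingMap.compLinearMap_apply, AlternatingMap.smul_apply, smul_eq_mul] at h
  exact h

theorem isUnit_det_of_isUnit_det_gram (e : Basis ι R M) (B : M →ₗ[R] M →ₗ[R] R)
    {u v : ι → M} (h : IsUnit (Matrix.of fun i j => B (u i) (v j)).det) : IsUnit (e.det u) := by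
  rw [e.det_gram_eq_mul_det B] at h
  exact isUnit_of_mul_isUnit_right h

noncomputable def ofIsUnitDetGram (e : Basis ι R M) (B : M →ₗ[R] M →ₗ[R] R)
    {u v : ι → M} (h : IsUnit (Matrix.of fun i j => B (u i) (v j)).det) : Basis ι R M :=
  have hu := e.is_basis_iff_det.mpr (e.isUnit_det_of_isUnit_det_gram B h)
  Basis.mk hu.1 hu.2.ge

@[simp]
theorem coe_ofIsUnitDetGram (e : Basis ι R M) (B : M →ₗ[R] M →ₗ[R] R) {u v : ι → M}
    (h : IsUnit (Matrix.of fun i j => B (u i) (v j)).det) : ⇑(e.ofIsUnitDetGram B h) = u := by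
  simp [ofIsUnitDetGram]

end Gram

variable {ι R M : Type*} [CommRing R] [AddCommGroup M] [Module R M]

theorem apply_equiv_apply_equiv_of_gram_eq (B : M →ₗ[R] M →ₗ[R] R) (b b' : Basis ι R M)
    (h : ∀ i j, B (b i) (b j) = B (b' i) (b' j)) (x y : M) :
    B (b.equiv b' (Equiv.refl ι) x) (b.equiv b' (Equiv.refl ι) y) = B x y := by
  let φ := b.equiv b' (Equiv.refl ι)
  have hB : B.compl₁₂ (φ : M →ₗ[R] M) φ = B :=
    LinearMap.ext_basis b b fun i j => by simp [φ, h]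
  exact congr($hB x y)

end Module.Basis

theorem LinearMap.SeparatingLeft.eq_of_forall_basis {ι R M : Type*} [CommRing R]
    [AddCommGroup M] [Module R M] {B : M →ₗ[R] M →ₗ[R] R} (hB : B.SeparatingLeft)
    (b : Module.Basis ι R M) {x y : M} (h : ∀ i, B x (b i) = B y (b i)) : x = y :=
  LinearMap.ker_eq_bot.mp (LinearMap.separatingLeft_iff_ker_eq_bot.mp hB) (b.ext h)

theorem ZMod.natCast_ne_natCast_of_lt {N a b : ℕ} (ha : a < N) (hb : b < N) (hab : a ≠ b) :
    (a : ZMod N) ≠ b := fun h => hab <| by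
  simpa [ZMod.val_cast_of_lt ha, ZMod.val_cast_of_lt hb] using congrArg ZMod.val h

namespace IsToricSystem

variable {V : Type*} [AddCommGroup V] {form : V → V → ℤ} {negK : V}

theorem form_eq_of_form_self_eq {m : ℕ} [NeZero m] {A A' : ZMod m → V}
    (hsymm : ∀ v w, form v w = form w v) (hA : IsToricSystem form negK m A)
    (hA' : IsToricSystem form negK m A') (hsq : ∀ i, form (A i) (A i) = form (A' i) (A' i))
    (i j : ZMod m) : form (A i) (A j) = form (A' i) (A' j) := by
  by_cases hnext : j = i + 1
  · rw [hnext, hA.1, hA'.1]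
  by_cases hself : j = i
  · rw [hself, hsq]
  by_cases hprev : j = i - 1
  · obtain rfl : i = j + 1 := by rw [hprev, sub_add_cancel]
    rw [hsymm, hA.1, hsymm, hA'.1]
  · rw [hA.2.1 i j hprev hself hnext, hA'.2.1 i j hprev hself hnext]

theorem det_gram_succ_eq_one {k : ℕ} {A : ZMod (k + 2) → V}
    (hA : IsToricSystem form negK (k + 2) A) :
    (Matrix.of fun i j : Fin k =>
      form (A ((i : ℕ) : ZMod (k + 2))) (A (((j : ℕ) : ZMod (k + 2)) + 1))).det = 1 := by
  rw [Matrix.det_of_isLowerTriangular]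
  · simp [hA.1]
  intro i j (hij : i < j)
  have hne : ∀ a b : ℕ, a < k + 2 → b < k + 2 → a ≠ b → (a : ZMod (k + 2)) ≠ b :=
    fun _ _ => ZMod.natCast_ne_natCast_of_lt
  refine hA.2.1 _ _ (fun h => ?_) (fun h => ?_) (fun h => ?_)
  · exact hne (j + 2) i (by omega) (by omega) (by omega) (by push_cast; linear_combination h)
  · exact hne (j + 1) i (by omega) (by omega) (by omega) (by push_cast; exact h)
  · exact hne (j + 1) (i + 1) (by omega) (by omega) (by omega) (by push_cast; exact h)

end IsToricSystem

def excBilin (n : ℕ) : LinearMap.BilinForm ℤ (Fin (n + 1) → ℤ) :=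
  LinearMap.mk₂ ℤ (excForm n)
    (fun _ _ _ => by simp only [excForm, Pi.add_apply, add_mul, Finset.sum_add_distrib]; ring)
    (fun _ _ _ => by
      simp only [excForm, Pi.smul_apply, smul_eq_mul, mul_sub, Finset.mul_sum, mul_assoc])
    (fun _ _ _ => by simp only [excForm, Pi.add_apply, mul_add, Finset.sum_add_distrib]; ring)
    (fun _ _ _ => by
      simp only [excForm, Pi.smul_apply, smul_eq_mul, mul_sub, Finset.mul_sum, mul_left_comm])

@[simp]
theorem excBilin_apply (n : ℕ) (v w : Fin (n + 1) → ℤ) : excBilin n v w = excForm n v w := rfl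

theorem excForm_comm (n : ℕ) (v w : Fin (n + 1) → ℤ) : excForm n v w = excForm n w v := by
  simp only [excForm, mul_comm]

theorem excBilin_separatingLeft (n : ℕ) : (excBilin n).SeparatingLeft := by
  intro v hv
  funext k
  cases k using Fin.cases with
  | zero => simpa [excForm] using hv (Pi.single 0 1)
  | succ k => simpa [excForm, Pi.single_apply] using hv (Pi.single k.succ 1)

theorem toricSystems_isometric_general (n : ℕ)
    (A A' : ZMod (n + 3) → (Fin (n + 1) → ℤ))
    (hA : IsToricSystem (excForm n) (excNegK n) (n + 3) A)
    (hA' : IsToricSystem (excForm n) (excNegK n) (n + 3) A')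
    (hsq : ∀ i, excForm n (A i) (A i) = excForm n (A' i) (A' i)) :
    ∃ φ : (Fin (n + 1) → ℤ) ≃ₗ[ℤ] (Fin (n + 1) → ℤ),
      (∀ v w, excForm n (φ v) (φ w) = excForm n v w) ∧
      φ (excNegK n) = excNegK n ∧
      ∀ i, φ (A i) = A' i := by
  have hgram := hA.form_eq_of_form_self_eq (excForm_comm n) hA' hsq
  let e := Pi.basisFun ℤ (Fin (n + 1))
  let b := e.ofIsUnitDetGram (excBilin n) (hA.det_gram_succ_eq_one ▸ isUnit_one)
  let b' := e.ofIsUnitDetGram (excBilin n) (hA'.det_gram_succ_eq_one ▸ isUnit_one)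
  have hb : ∀ j : Fin (n + 1), b j = A j := congrFun (e.coe_ofIsUnitDetGram _ _)
  have hb' : ∀ j : Fin (n + 1), b' j = A' j := congrFun (e.coe_ofIsUnitDetGram _ _)
  let φ := b.equiv b' (Equiv.refl _)
  have hφb : ∀ j, φ (b j) = b' j := fun j => b.equiv_apply j b' (Equiv.refl _)
  have hφ_isometry : ∀ v w, excBilin n (φ v) (φ w) = excBilin n v w :=
    b.apply_equiv_apply_equiv_of_gram_eq _ b' fun i j => by
      rw [hb, hb, hb', hb']
      exact hgram _ _
  have hφA : ∀ i, φ (A i) = A' i := fun i =>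
    (excBilin_separatingLeft n).eq_of_forall_basis b' fun j =>
      calc excBilin n (φ (A i)) (b' j) = excBilin n (φ (A i)) (φ (b j)) := by rw [hφb]
        _ = excBilin n (A' i) (b' j) := by rw [hφ_isometry, hb, hb']; exact hgram _ _
  refine ⟨φ, hφ_isometry, ?_, hφA⟩
  calc φ (excNegK n) = φ (∑ i, A i) := by rw [hA.2.2]
    _ = ∑ i, A' i := by simp only [map_sum, hφA]
    _ = excNegK n := hA'.2.2

/-- If two toric systems `A`, `A'` on a rational surface of Picard number `n+1`
(with an exceptional basis diagonalizing the intersection form with signature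
`(1, -1, …, -1)` and `-K = 3H - ∑ R_i`) have the same self-intersections `A_i² = A_i'²`,
then some automorphism of the Picard lattice preserving the intersection pairing and
the canonical class carries `A` to `A'`. -/
theorem toricSystems_isometric (n : ℕ) (hn : 1 ≤ n)
    (A A' : ZMod (n + 3) → (Fin (n + 1) → ℤ))
    (hA : IsToricSystem (excForm n) (excNegK n) (n + 3) A)
    (hA' : IsToricSystem (excForm n) (excNegK n) (n + 3) A')
    (hsq : ∀ i, excForm n (A i) (A i) = excForm n (A' i) (A' i)) :
    ∃ φ : (Fin (n + 1) → ℤ) ≃ₗ[ℤ] (Fin (n + 1) → ℤ),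
      (∀ v w, excForm n (φ v) (φ w) = excForm n v w) ∧
      φ (excNegK n) = excNegK n ∧
      ∀ i, φ (A i) = A' i :=
  toricSystems_isometric_general n A A' hA hA' hsq
end

section
/- For a toric system $\mathcal{A}=(A_1,\ldots,A_n)$ on a smooth rational surface $X$ of Picard number $n-2$, the map $\mathrm{Pic}(X) \to \mathbb{Z}^n$, $D \mapsto (D\cdot A_1, \ldots, D\cdot A_n)$, is injective and its cokernel is isomorphic to $\mathbb{Z}^2$ (assuming the intersection form on $\mathrm{Pic}(X)\cong\mathbb{Z}^{n-2}$ is unimodular of signature $(1, n-3)$). -/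
/-!
Over a field `F`, the classes `Aᵢ` span `F^(n-2)`: pairing a relation `∑ xᵢ Aᵢ = 0` with `Aⱼ`
gives `x_(j-1) + (Aⱼ·Aⱼ) xⱼ + x_(j+1) = 0`, so a relation is determined by `x₀, x₁` and the
relations form a space of dimension at most `2`. As `det M = ±1` stays a unit in `ℚ` and in every
`𝔽_p`, the pairing `D ↦ (D·Aᵢ)ᵢ` is then injective over `ℚ` and modulo every prime `p`. The first
fact gives injectivity over `ℤ`, the second that the image is saturated in `ℤⁿ`, so the cokernel is
a finitely generated torsion-free, hence free, abelian group of rank `n - (n - 2) = 2`.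
-/

open Matrix

theorem ZMod.natCast_ne_zero_of_lt {n k : ℕ} (hk0 : k ≠ 0) (hkn : k < n) : (k : ZMod n) ≠ 0 := by
  rw [← ZMod.val_ne_zero, ZMod.val_natCast_of_lt hkn]
  exact hk0

theorem eq_zero_of_cyclic_recurrence {R : Type*} [Ring R] {n : ℕ} [NeZero n] {c x : ZMod n → R}
    (hrec : ∀ j, x (j - 1) + c j * x j + x (j + 1) = 0) (h0 : x 0 = 0) (h1 : x 1 = 0) :
    x = 0 := by
  have hpair : ∀ m : ℕ, x m = 0 ∧ x (m + 1) = 0 := by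
    intro m
    induction m with
    | zero => simpa using ⟨h0, h1⟩
    | succ m ih =>
      refine ⟨mod_cast ih.2, ?_⟩
      have h := hrec (m + 1)
      rw [add_sub_cancel_right, ih.1, ih.2] at h
      push_cast
      simpa using h
  funext j
  obtain ⟨m, rfl⟩ := ZMod.natCast_zmod_surjective j
  exact (hpair m).1

section ToricIntersections

variable {R V : Type*} [CommRing R] [AddCommGroup V] [Module R V] {n : ℕ} [NeZero n]

/-- The intersection conditions of `IsToricSystem`, for a bilinear form over any ring. -/
structure HasToricIntersections (B : LinearMap.BilinForm R V) (A : ZMod n → V) : Prop where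
  adjacent : ∀ i, B (A i) (A (i + 1)) = 1
  nonadjacent : ∀ i j, j ≠ i - 1 → j ≠ i → j ≠ i + 1 → B (A i) (A j) = 0

namespace HasToricIntersections

variable {B : LinearMap.BilinForm R V} {A : ZMod n → V}

theorem recurrence_of_sum_smul_eq_zero (hA : HasToricIntersections B A) (hB : B.IsSymm)
    (hn : 3 ≤ n) {x : ZMod n → R} (hx : ∑ i, x i • A i = 0) (j : ZMod n) :
    x (j - 1) + B (A j) (A j) * x j + x (j + 1) = 0 := by
  have h1 : (1 : ZMod n) ≠ 0 :=
    mod_cast ZMod.natCast_ne_zero_of_lt (k := 1) one_ne_zero (by omega)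
  have h2 : (2 : ZMod n) ≠ 0 :=
    mod_cast ZMod.natCast_ne_zero_of_lt (k := 2) two_ne_zero (by omega)
  have hne₁ : j - 1 ≠ j := by simpa [sub_eq_self] using h1
  have hne₂ : j + 1 ≠ j := by simpa using h1
  have hne₃ : j - 1 ≠ j + 1 := fun h => h2 (by linear_combination -h)
  have hpair : ∑ i, x i * B (A i) (A j) = 0 := by
    simpa using congrArg (fun v => B v (A j)) hx
  rw [← Finset.sum_subset (Finset.subset_univ {j - 1, j, j + 1}),
    Finset.sum_insert (by simp [hne₁, hne₃]), Finset.sum_insert (by simpa using hne₂.symm),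
    Finset.sum_singleton] at hpair
  · have hprev := hA.adjacent (j - 1)
    rw [sub_add_cancel] at hprev
    rw [hprev, hB.eq (A (j + 1)), hA.adjacent j] at hpair
    linear_combination hpair
  · intro i _ hi
    simp only [Finset.mem_insert, Finset.mem_singleton, not_or] at hi
    rw [hB.eq, hA.nonadjacent j i hi.1 hi.2.1 hi.2.2, mul_zero]

end HasToricIntersections

end ToricIntersections

namespace HasToricIntersections

variable {F V : Type*} [Field F] [AddCommGroup V] [Module F V] [FiniteDimensional F V] {n : ℕ}
  [NeZero n] {B : LinearMap.BilinForm F V} {A : ZMod n → V}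

theorem span_range_eq_top (hA : HasToricIntersections B A) (hB : B.IsSymm) (hn : 3 ≤ n)
    (hV : Module.finrank F V ≤ n - 2) : Submodule.span F (Set.range A) = ⊤ := by
  set L := Fintype.linearCombination F A
  have hker : Module.finrank F (LinearMap.ker L) ≤ 2 := by
    let ev : LinearMap.ker L →ₗ[F] F × F :=
      (LinearMap.prod (LinearMap.proj 0) (LinearMap.proj 1)).comp (LinearMap.ker L).subtype
    have hev : Function.Injective ev := by
      rw [injective_iff_map_eq_zero]
      rintro ⟨x, hx⟩ hx01
      obtain ⟨hx0, hx1⟩ : x 0 = 0 ∧ x 1 = 0 := Prod.mk_eq_zero.mp hx01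
      rw [LinearMap.mem_ker, Fintype.linearCombination_apply] at hx
      exact Subtype.ext (eq_zero_of_cyclic_recurrence
        (hA.recurrence_of_sum_smul_eq_zero hB hn hx) hx0 hx1)
    simpa using LinearMap.finrank_le_finrank_of_injective hev
  have hrank := L.finrank_range_add_finrank_ker
  rw [Fintype.range_linearCombination, Module.finrank_pi, ZMod.card] at hrank
  have hle := Submodule.finrank_le (Submodule.span F (Set.range A))
  exact Submodule.eq_top_of_finrank_eq (by omega)

theorem eq_zero_of_forall_apply_eq_zero (hA : HasToricIntersections B A) (hB : B.IsSymm)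
    (hsep : B.SeparatingLeft) (hn : 3 ≤ n) (hV : Module.finrank F V ≤ n - 2) {D : V}
    (hD : ∀ i, B D (A i) = 0) : D = 0 :=
  hsep D fun w => by
    rw [LinearMap.ext_on_range (hA.span_range_eq_top hB hn hV) (g := 0) hD, LinearMap.zero_apply]

end HasToricIntersections

theorem RingHom.map_dotProduct_mulVec {R S ι : Type*} [CommRing R] [CommRing S] [Fintype ι]
    (σ : R →+* S) (M : Matrix ι ι R) (v w : ι → R) :
    σ (v ⬝ᵥ M *ᵥ w) = σ ∘ v ⬝ᵥ M.map σ *ᵥ (σ ∘ w) := by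
  rw [σ.map_dotProduct]
  congr 1
  funext i
  exact σ.map_mulVec M w i

section IntegralToricSystem

variable {ι : Type*} [Fintype ι] [DecidableEq ι] {n : ℕ} [NeZero n] {M : Matrix ι ι ℤ}
  {negK : ι → ℤ} {A : ZMod n → ι → ℤ}

theorem IsToricSystem.hasToricIntersections_map {R : Type*} [CommRing R]
    (hA : IsToricSystem (fun v w => v ⬝ᵥ M *ᵥ w) negK n A) (σ : ℤ →+* R) :
    HasToricIntersections (M.map σ).toBilin' fun i => σ ∘ A i where
  adjacent i := by
    rw [Matrix.toBilin'_apply', ← σ.map_dotProduct_mulVec]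
    exact (congrArg σ (hA.1 i)).trans σ.map_one
  nonadjacent i j h₁ h₂ h₃ := by
    rw [Matrix.toBilin'_apply', ← σ.map_dotProduct_mulVec]
    exact (congrArg σ (hA.2.1 i j h₁ h₂ h₃)).trans σ.map_zero

theorem IsToricSystem.comp_eq_zero_of_forall_map_pairing_eq_zero {F : Type*} [Field F]
    (hA : IsToricSystem (fun v w => v ⬝ᵥ M *ᵥ w) negK n A) (hn : 3 ≤ n)
    (hcard : Fintype.card ι ≤ n - 2) (hM : M.IsSymm) (hdet : IsUnit M.det) (σ : ℤ →+* F)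
    {D : ι → ℤ} (hD : ∀ i, σ (D ⬝ᵥ M *ᵥ A i) = 0) : σ ∘ D = 0 := by
  have hdet' : (M.map σ).det ≠ 0 := by
    rw [← RingHom.mapMatrix_apply, ← RingHom.map_det]
    exact (hdet.map σ).ne_zero
  refine (hA.hasToricIntersections_map σ).eq_zero_of_forall_apply_eq_zero
    (Matrix.isSymm_toBilin'_iff_isSymm.mpr (hM.map σ))
    (LinearMap.BilinForm.nondegenerate_toBilin'_of_det_ne_zero' _ hdet').1 hn
    (by simpa using hcard) fun i => ?_
  rw [Matrix.toBilin'_apply', ← σ.map_dotProduct_mulVec, hD i]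

end IntegralToricSystem

theorem exists_eq_nsmul_of_intCast_comp_eq_zero {ι : Type*} {p : ℕ} {D : ι → ℤ}
    (hD : Int.castRingHom (ZMod p) ∘ D = 0) : ∃ E : ι → ℤ, D = p • E := by
  choose E hE using fun t => (ZMod.intCast_zmod_eq_zero_iff_dvd (D t) p).mp (congrFun hD t)
  exact ⟨E, funext fun t => by simp [hE t]⟩

section Saturation

variable {M N : Type*} [AddCommGroup M] [AddCommGroup N]

theorem LinearMap.mem_range_of_nsmul_mem_range [IsAddTorsionFree N] (f : M →ₗ[ℤ] N)
    (hdiv : ∀ p : ℕ, p.Prime → ∀ x y, f x = p • y → ∃ z, x = p • z) {m : ℕ} (hm : m ≠ 0)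
    {y : N} (hy : m • y ∈ LinearMap.range f) : y ∈ LinearMap.range f := by
  induction m using induction_on_primes generalizing y with
  | zero => exact absurd rfl hm
  | one => simpa using hy
  | prime_mul p a hp ih =>
    obtain ⟨x, hx⟩ := hy
    rw [mul_smul] at hx
    obtain ⟨z, rfl⟩ := hdiv p hp x (a • y) hx
    refine ih (right_ne_zero_of_mul hm) ⟨z, nsmul_right_injective hp.ne_zero ?_⟩
    simpa using hx

theorem LinearMap.isAddTorsionFree_quotient_range [IsAddTorsionFree N] (f : M →ₗ[ℤ] N)
    (hdiv : ∀ p : ℕ, p.Prime → ∀ x y, f x = p • y → ∃ z, x = p • z) :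
    IsAddTorsionFree (N ⧸ LinearMap.range f) where
  nsmul_right_injective m hm a b hab := by
    obtain ⟨a, rfl⟩ := Submodule.mkQ_surjective _ a
    obtain ⟨b, rfl⟩ := Submodule.mkQ_surjective _ b
    simp only [Submodule.mkQ_apply, ← Submodule.Quotient.mk_smul,
      Submodule.Quotient.eq] at hab ⊢
    rw [← smul_sub] at hab
    exact f.mem_range_of_nsmul_mem_range hdiv hm hab

theorem LinearMap.nonempty_quotient_range_linearEquiv [Module.Finite ℤ N] (f : M →ₗ[ℤ] N)
    (hf : Function.Injective f) [IsAddTorsionFree (N ⧸ LinearMap.range f)] {k : ℕ}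
    (hrank : Module.finrank ℤ N = Module.finrank ℤ M + k) :
    Nonempty ((N ⧸ LinearMap.range f) ≃ₗ[ℤ] (Fin k → ℤ)) := by
  have : Module.IsTorsionFree ℤ (N ⧸ LinearMap.range f) :=
    Module.isTorsionFree_int_iff_isAddTorsionFree.mpr ‹_›
  refine FiniteDimensional.nonempty_linearEquiv_of_finrank_eq ?_
  have := (LinearMap.range f).finrank_quotient_add_finrank
  rw [LinearMap.finrank_range_of_inj hf] at this
  simp only [Module.finrank_fin_fun]
  omega

end Saturation

theorem galeDuality_exact_general (n : ℕ) [NeZero n] (hn : 4 ≤ n)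
    (M : Matrix (Fin (n - 2)) (Fin (n - 2)) ℤ) (hMsymm : M.IsSymm)
    (hMdet : IsUnit M.det)
    (negK : Fin (n - 2) → ℤ)
    (A : ZMod n → (Fin (n - 2) → ℤ))
    (hA : IsToricSystem (fun v w => v ⬝ᵥ M.mulVec w) negK n A)
    (f : (Fin (n - 2) → ℤ) →ₗ[ℤ] (ZMod n → ℤ))
    (hf : ∀ D i, f D i = D ⬝ᵥ M.mulVec (A i)) :
    Function.Injective f ∧
    Nonempty (((ZMod n → ℤ) ⧸ LinearMap.range f) ≃ₗ[ℤ] (Fin 2 → ℤ)) := by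
  have hreduce {F : Type} [Field F] (σ : ℤ →+* F) (D : Fin (n - 2) → ℤ)
      (hD : ∀ i, σ (f D i) = 0) : σ ∘ D = 0 :=
    hA.comp_eq_zero_of_forall_map_pairing_eq_zero (by omega) (by simp) hMsymm hMdet σ
      fun i => hf D i ▸ hD i
  have hinj : Function.Injective f := by
    refine (injective_iff_map_eq_zero f).mpr fun D hD => funext fun t => ?_
    simpa using congrFun (hreduce (Int.castRingHom ℚ) D fun i => by simp [hD]) t
  have hdiv (p : ℕ) (hp : p.Prime) (D : Fin (n - 2) → ℤ) (y : ZMod n → ℤ) (hD : f D = p • y) :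
      ∃ E, D = p • E :=
    have : Fact p.Prime := ⟨hp⟩
    exists_eq_nsmul_of_intCast_comp_eq_zero <|
      hreduce (Int.castRingHom (ZMod p)) D fun i => by simp [hD]
  have := f.isAddTorsionFree_quotient_range hdiv
  refine ⟨hinj, f.nonempty_quotient_range_linearEquiv hinj ?_⟩
  simp only [Module.finrank_pi, ZMod.card, Fintype.card_fin]
  omega

/-- Gale duality exact sequence: for a toric system `A = (A_1, …, A_n)` on a smooth
rational surface of Picard number `n - 2`, whose Picard lattice is `ℤ^{n-2}` with a
unimodular symmetric intersection form of signature `(1, n-3)` (encoded by a symmetric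
integer matrix `M` with `det M = ±1`, possessing a vector of positive square but no
two-dimensional positive-definite subspace over `ℚ`), the map
`D ↦ (D·A_1, …, D·A_n)` is injective with cokernel isomorphic to `ℤ²`. -/
theorem galeDuality_exact (n : ℕ) [NeZero n] (hn : 4 ≤ n)
    (M : Matrix (Fin (n - 2)) (Fin (n - 2)) ℤ) (hMsymm : M.IsSymm)
    (hMdet : IsUnit M.det)
    (hpos : ∃ x : Fin (n - 2) → ℚ,
      0 < x ⬝ᵥ (M.map (Int.cast : ℤ → ℚ)).mulVec x)
    (hind : ∀ x y : Fin (n - 2) → ℚ,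
      (∀ a b : ℚ, ¬ (a = 0 ∧ b = 0) →
        0 < (a • x + b • y) ⬝ᵥ (M.map (Int.cast : ℤ → ℚ)).mulVec (a • x + b • y)) →
      ¬ LinearIndependent ℚ ![x, y])
    (negK : Fin (n - 2) → ℤ)
    (A : ZMod n → (Fin (n - 2) → ℤ))
    (hA : IsToricSystem (fun v w => v ⬝ᵥ M.mulVec w) negK n A)
    (f : (Fin (n - 2) → ℤ) →ₗ[ℤ] (ZMod n → ℤ))
    (hf : ∀ D i, f D i = D ⬝ᵥ M.mulVec (A i)) :
    Function.Injective f ∧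
    Nonempty (((ZMod n → ℤ) ⧸ LinearMap.range f) ≃ₗ[ℤ] (Fin 2 → ℤ)) :=
  galeDuality_exact_general n hn M hMsymm hMdet negK A hA f hf
end
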